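/- arXiv:2003.08338 — 3 statements merged into one kernel-verified Lean document; each statement's English description precedes it below -/
import Mathlib

section
/- For integers i ≥ 0 and elements A, B, M of a commutative ring, ∑_{j=0}^{i} ∑_{k=0}^{j} binom(i,j)·binom(j,k)·binom(M+j,k)·k!·(-1)^{i-j}·A^k·B^j = (-1)^i · ∑_{k=0}^{i} binom(i,k)·(-AB)^k·k!·∑_{j=0}^{k} binom(M+k,k-j)·binom(i-k,j)·(1-B)^{i-k-j}·(-B)^j. -/
/-- The generalized binomial coefficient `binom(x,k) = x(x-1)⋯(x-k+1)/k!` for an element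
`x` of a commutative `ℚ`-algebra. -/
noncomputable def genBinom {S : Type*} [CommRing S] [Algebra ℚ S] (x : S) (k : ℕ) : S :=
  algebraMap ℚ S ((k.factorial : ℚ))⁻¹ * ∏ t ∈ Finset.range k, (x - (t : S))

/-!
Writing `(-1)^(i-j) B^j = (-1)^i (-B)^j`, the identity becomes sign free. After swapping the
two sums, `binom(i,j) binom(j,k) = binom(i,k) binom(i-k,j-k)` reindexes the sum over `j` as
`j = k + s`, and Chu–Vandermonde splits `binom(M+k+s,k) = ∑_l binom(M+k,k-l) binom(s,l)`.
What remains is `∑_s binom(m,s) binom(s,l) x^s y^(m-s) = binom(m,l) x^l (x+y)^(m-l)`, the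
`l`-th derivative of the binomial theorem divided by `l!`, taken at `x = -B`, `y = 1`.
-/

open Finset Polynomial

theorem sum_choose_mul_choose_mul {R : Type*} [Semiring R] (n j : ℕ) (f : ℕ → R) :
    ∑ s ∈ range (n + 1), (n.choose s * s.choose j : R) * f s
      = n.choose j * ∑ t ∈ range (n - j + 1), ((n - j).choose t : R) * f (j + t) := by
  rcases le_or_gt j n with hjn | hnj
  · rw [show n + 1 = j + (n - j + 1) by omega, sum_range_add, mul_sum]
    have hlow : ∀ s ∈ range j, (n.choose s * s.choose j : R) * f s = 0 := fun s hs => by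
      rw [Nat.choose_eq_zero_of_lt (mem_range.1 hs)]
      simp
    rw [sum_eq_zero hlow, zero_add]
    refine sum_congr rfl fun t _ => ?_
    rw [← Nat.cast_mul, Nat.choose_mul (Nat.le_add_right j t), Nat.add_sub_cancel_left,
      Nat.cast_mul, mul_assoc]
  · rw [Nat.choose_eq_zero_of_lt hnj, Nat.cast_zero, zero_mul]
    refine sum_eq_zero fun s hs => ?_
    rw [Nat.choose_eq_zero_of_lt (by simp at hs; omega : s < j)]
    simp

theorem sum_choose_mul_choose_mul_pow_mul_pow {R : Type*} [CommSemiring R] (x y : R) (n j : ℕ) :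
    ∑ s ∈ range (n + 1), (n.choose s * s.choose j : R) * (x ^ s * y ^ (n - s))
      = n.choose j * x ^ j * (x + y) ^ (n - j) := by
  rw [sum_choose_mul_choose_mul n j (fun s => x ^ s * y ^ (n - s)), add_pow]
  simp only [mul_sum]
  refine sum_congr rfl fun t _ => ?_
  rw [pow_add, Nat.sub_add_eq]
  ring

theorem neg_one_pow_sub_mul_pow {R : Type*} [CommRing R] (x : R) {m t : ℕ} (h : t ≤ m) :
    (-1) ^ (m - t) * x ^ t = (-1) ^ m * (-x) ^ t := by
  obtain ⟨d, rfl⟩ := Nat.exists_eq_add_of_le h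
  have hsq : ((-1 : R) ^ t) * (-1) ^ t = 1 := by
    rw [← mul_pow]
    norm_num
  rw [Nat.add_sub_cancel_left, neg_pow, pow_add]
  linear_combination (-((-1) ^ d * x ^ t)) * hsq

theorem descPochhammer_smeval_eq_prod_range {R : Type*} [CommRing R] (k : ℕ) (x : R) :
    (descPochhammer ℤ k).smeval x = ∏ t ∈ range k, (x - t) := by
  rw [← aeval_eq_smeval, aeval_def, ← eval_map, descPochhammer_map,
    descPochhammer_eval_eq_prod_range]

section GenBinom

variable {S : Type*} [CommRing S] [Algebra ℚ S]

-- Mathlib's `BinomialRing` instance for rational algebras is stated over `ℚ≥0`.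
noncomputable local instance : Module ℚ≥0 S := Module.compHom S NNRat.coeHom

theorem genBinom_eq_choose (x : S) (k : ℕ) : genBinom x k = Ring.choose x k := by
  rw [genBinom, ← descPochhammer_smeval_eq_prod_range,
    Ring.descPochhammer_eq_factorial_smul_choose, nsmul_eq_mul, ← mul_assoc,
    ← map_natCast (algebraMap ℚ S), ← map_mul, inv_mul_cancel₀ (by positivity), map_one, one_mul]

theorem genBinom_add_natCast (x : S) (s k : ℕ) :
    genBinom (x + s) k = ∑ l ∈ range (k + 1), genBinom x (k - l) * (s.choose l : S) := by
  rw [genBinom_eq_choose, Ring.add_choose_eq k (Commute.all _ _), ← Nat.sum_antidiagonal_swap]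
  simp only [Prod.fst_swap, Prod.snd_swap]
  rw [Nat.sum_antidiagonal_eq_sum_range_succ (fun a b => Ring.choose x b * Ring.choose (s : S) a)]
  simp only [genBinom_eq_choose, Ring.choose_natCast]

theorem sum_choose_mul_genBinom_add_mul_pow_mul_pow (z x y : S) (n k : ℕ) :
    ∑ s ∈ range (n + 1), (n.choose s : S) * genBinom (z + s) k * (x ^ s * y ^ (n - s))
      = ∑ l ∈ range (k + 1), genBinom z (k - l) * n.choose l * (x + y) ^ (n - l) * x ^ l := by
  have hvandermonde : ∀ s ∈ range (n + 1),
      (n.choose s : S) * genBinom (z + s) k * (x ^ s * y ^ (n - s))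
        = ∑ l ∈ range (k + 1),
            genBinom z (k - l) * ((n.choose s * s.choose l : S) * (x ^ s * y ^ (n - s))) :=
    fun s _ => by
      rw [genBinom_add_natCast, mul_sum, sum_mul]
      exact sum_congr rfl fun l _ => by ring
  rw [sum_congr rfl hvandermonde, sum_comm]
  refine sum_congr rfl fun l _ => ?_
  rw [← mul_sum, sum_choose_mul_choose_mul_pow_mul_pow]
  ring

theorem sum_sum_choose_mul_choose_mul_genBinom (M a x y : S) (i : ℕ) :
    ∑ j ∈ range (i + 1), ∑ k ∈ range (j + 1), (i.choose j * j.choose k : S) *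
        (genBinom (M + j) k * k.factorial * a ^ k * (x ^ j * y ^ (i - j)))
      = ∑ k ∈ range (i + 1), (i.choose k : S) * (a * x) ^ k * k.factorial *
          ∑ l ∈ range (k + 1),
            genBinom (M + k) (k - l) * (i - k).choose l * (x + y) ^ (i - k - l) * x ^ l := by
  have hextend : ∀ j ∈ range (i + 1),
      ∑ k ∈ range (j + 1), (i.choose j * j.choose k : S) *
          (genBinom (M + j) k * k.factorial * a ^ k * (x ^ j * y ^ (i - j)))
        = ∑ k ∈ range (i + 1), (i.choose j * j.choose k : S) *
          (genBinom (M + j) k * k.factorial * a ^ k * (x ^ j * y ^ (i - j))) := by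
    intro j hj
    refine sum_subset (range_subset_range.2 (mem_range.1 hj)) fun k _ hk => ?_
    rw [Nat.choose_eq_zero_of_lt (not_lt.1 (mem_range.not.1 hk))]
    simp
  rw [sum_congr rfl hextend, sum_comm]
  refine sum_congr rfl fun k _ => ?_
  have hshift : ∀ t ∈ range (i - k + 1),
      ((i - k).choose t : S) * (genBinom (M + ↑(k + t)) k * k.factorial * a ^ k *
          (x ^ (k + t) * y ^ (i - (k + t))))
        = ((a * x) ^ k * k.factorial) *
          (((i - k).choose t : S) * genBinom (M + k + t) k * (x ^ t * y ^ (i - k - t))) := by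
    intro t _
    rw [Nat.cast_add, ← add_assoc, pow_add, Nat.sub_add_eq]
    ring
  rw [sum_choose_mul_choose_mul, sum_congr rfl hshift, ← mul_sum,
    sum_choose_mul_genBinom_add_mul_pow_mul_pow]
  ring

end GenBinom

/-- For integers `i ≥ 0` and elements `A`, `B`, `M` of a commutative `ℚ`-algebra:
`∑_{j=0}^{i} ∑_{k=0}^{j} binom(i,j)·binom(j,k)·binom(M+j,k)·k!·(-1)^{i-j}·A^k·B^j
 = (-1)^i · ∑_{k=0}^{i} binom(i,k)·(-AB)^k·k!·
     ∑_{j=0}^{k} binom(M+k,k-j)·binom(i-k,j)·(1-B)^{i-k-j}·(-B)^j`. -/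
theorem binomial_double_sum_identity {S : Type*} [CommRing S] [Algebra ℚ S]
    (M A B : S) (i : ℕ) :
    (∑ j ∈ Finset.range (i + 1), ∑ k ∈ Finset.range (j + 1),
        (i.choose j : S) * (j.choose k : S) * genBinom (M + (j : S)) k *
          (k.factorial : S) * (-1 : S) ^ (i - j) * A ^ k * B ^ j)
      = (-1 : S) ^ i * ∑ k ∈ Finset.range (i + 1),
          (i.choose k : S) * (-(A * B)) ^ k * (k.factorial : S) *
            ∑ j ∈ Finset.range (k + 1),
              genBinom (M + (k : S)) (k - j) * ((i - k).choose j : S) *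
                (1 - B) ^ (i - k - j) * (-B) ^ j := by
  have hsign : ∀ j ∈ range (i + 1), ∀ k ∈ range (j + 1),
      (i.choose j : S) * (j.choose k : S) * genBinom (M + (j : S)) k *
          (k.factorial : S) * (-1 : S) ^ (i - j) * A ^ k * B ^ j
        = (-1) ^ i * ((i.choose j * j.choose k : S) *
            (genBinom (M + j) k * k.factorial * A ^ k * ((-B) ^ j * 1 ^ (i - j)))) :=
    fun j hj k _ => by
      linear_combination (i.choose j * j.choose k * genBinom (M + j) k * k.factorial * A ^ k : S) *
        neg_one_pow_sub_mul_pow B (Nat.lt_succ_iff.1 (mem_range.1 hj))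
  rw [sum_congr rfl fun j hj => sum_congr rfl (hsign j hj)]
  simp only [← mul_sum]
  rw [sum_sum_choose_mul_choose_mul_genBinom, neg_mul_eq_mul_neg, ← sub_eq_neg_add]
end

section
/- Let p be an odd prime and n ≥ 1. In the ring Λ = Z_p[[T]]⟨T^{p^{n-1}}/p⟩ (the p-adic completion of Z_p[[T]][T^{p^{n-1}}/p]), the element log(1+T) = ∑_{k≥1} (-1)^{k+1} T^k/k lies in p^{-n+2}·Λ, i.e. p^{n-2}·log(1+T) ∈ Λ. -/
open Filter

/-- The formal logarithm `log(1+T) = ∑_{k ≥ 1} (-1)^{k+1} T^k / k` in `ℚ_p[[T]]`. -/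
noncomputable def logOnePlusT (p : ℕ) [Fact p.Prime] : PowerSeries ℚ_[p] :=
  PowerSeries.mk fun k => if k = 0 then 0 else (-1) ^ (k + 1) / (k : ℚ_[p])

/-- Membership in `p^s·Λ` where `Λ = ℤ_p[[T]]⟨T^{p^{n-1}}/p⟩` is the `p`-adic completion of
`ℤ_p[[T]][T^{p^{n-1}}/p]`, described inside `ℚ_p[[T]]` coefficientwise: a series
`∑ a_k T^k` lies in `p^s·Λ` iff `‖a_k‖ ≤ p^{-s}·p^{⌊k/p^{n-1}⌋}` for all `k` and
`‖a_k‖/p^{⌊k/p^{n-1}⌋} → 0`. -/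
def MemLambda (p n : ℕ) [Fact p.Prime] (s : ℝ) (f : PowerSeries ℚ_[p]) : Prop :=
  (∀ k : ℕ, ‖PowerSeries.coeff (R := ℚ_[p]) k f‖ ≤ (p : ℝ) ^ (-s) * (p : ℝ) ^ (k / p ^ (n - 1))) ∧
    Tendsto (fun k : ℕ => ‖PowerSeries.coeff (R := ℚ_[p]) k f‖ / (p : ℝ) ^ (k / p ^ (n - 1)))
      atTop (nhds 0)

/-! The coefficient of `T^k` in `p^{n-2}·log(1+T)` has norm `p^{v_p(k)+2-n}`, and `p^{v_p(k)} ≤ k`.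
Since `p^{v_p(k)}` divides `k`, either `v_p(k) < m` or `p^{v_p(k) - m} ≤ ⌊k/p^m⌋`; in both cases
`v_p(k) < ⌊k/p^m⌋ + m`, which with `m = n - 1` is the required bound
`v_p(k) + 2 - n ≤ ⌊k/p^{n-1}⌋`. The decay condition holds because the coefficients grow at most
linearly while `p^{⌊k/p^{n-1}⌋}` grows exponentially. -/

open Topology PowerSeries

theorem padicValNat_lt_div_pow_add {p k : ℕ} (hp : 1 < p) (hk : k ≠ 0) (m : ℕ) :
    padicValNat p k < k / p ^ m + m := by
  set v := padicValNat p k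
  rcases lt_or_ge v m with hvm | hmv
  · exact hvm.trans_le (Nat.le_add_left _ _)
  have hpow : p ^ (v - m) ≤ k / p ^ m := by
    rw [← Nat.pow_div hmv (by omega)]
    exact Nat.div_le_div_right (Nat.le_of_dvd (Nat.pos_of_ne_zero hk) pow_padicValNat_dvd)
  have := Nat.lt_pow_self (n := v - m) hp
  omega

theorem tendsto_div_pow_div_atTop_of_le_mul {r C : ℝ} (hr : 1 < r) {m : ℕ} (hm : 0 < m)
    {a : ℕ → ℝ} (ha₀ : ∀ k, 0 ≤ a k) (ha : ∀ k, a k ≤ C * k) :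
    Tendsto (fun k => a k / r ^ (k / m)) atTop (𝓝 0) := by
  have hr₀ : 0 ≤ r⁻¹ := by positivity
  have hr₁ : r⁻¹ < 1 := inv_lt_one_of_one_lt₀ hr
  set g : ℕ → ℝ := fun j => C * m * ((j + 1) * r⁻¹ ^ j)
  have hg : Tendsto g atTop (𝓝 0) := by
    have := ((tendsto_self_mul_const_pow_of_lt_one hr₀ hr₁).add
      (tendsto_pow_atTop_nhds_zero_of_lt_one hr₀ hr₁)).const_mul (C * m)
    simpa [g, add_mul] using this
  refine squeeze_zero (fun k => div_nonneg (ha₀ k) (by positivity)) (fun k => ?_)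
    (hg.comp (map_div_atTop_eq_nat m hm).le)
  have hk : (k : ℝ) ≤ (k / m + 1 : ℕ) * m := by
    exact_mod_cast (Nat.lt_div_mul_add hm).le.trans_eq (by ring)
  have hC : 0 ≤ C := by simpa using ha₀ 1 |>.trans (ha 1)
  calc a k / r ^ (k / m) ≤ C * ((k / m + 1 : ℕ) * m) / r ^ (k / m) := by
        gcongr
        exact (ha k).trans (by gcongr)
    _ = g (k / m) := by
        simp only [g, inv_pow, Nat.cast_add, Nat.cast_one]
        field_simp

section

variable {p : ℕ} [Fact p.Prime]

theorem coeff_zero_logOnePlusT : coeff 0 (logOnePlusT p) = 0 := by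
  simp [logOnePlusT]

theorem norm_coeff_logOnePlusT {k : ℕ} (hk : k ≠ 0) :
    ‖coeff k (logOnePlusT p)‖ = (p : ℝ) ^ (padicValNat p k : ℤ) := by
  rw [logOnePlusT, coeff_mk, if_neg hk, norm_div, norm_pow, norm_neg, norm_one, one_pow,
    Padic.norm_eq_zpow_neg_valuation (Nat.cast_ne_zero.2 hk), Padic.valuation_natCast,
    zpow_neg, one_div, inv_inv]

theorem norm_coeff_logOnePlusT_le (k : ℕ) : ‖coeff k (logOnePlusT p)‖ ≤ k := by
  rcases eq_or_ne k 0 with rfl | hk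
  · simp [coeff_zero_logOnePlusT]
  rw [norm_coeff_logOnePlusT hk, zpow_natCast]
  exact_mod_cast Nat.le_of_dvd (Nat.pos_of_ne_zero hk) pow_padicValNat_dvd

end

theorem pow_mul_logOnePlus_mem_Lambda_general (p n : ℕ) [Fact p.Prime] (hn : 1 ≤ n) :
    MemLambda p n 0
      (PowerSeries.C (R := ℚ_[p]) ((p : ℚ_[p]) ^ ((n : ℤ) - 2)) * logOnePlusT p) := by
  have hp : 1 < p := (Fact.out : p.Prime).one_lt
  have hpR : (1 : ℝ) < p := mod_cast hp
  have hcoeff : ∀ k, ‖coeff k (C ((p : ℚ_[p]) ^ ((n : ℤ) - 2)) * logOnePlusT p)‖ =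
      ‖(p : ℚ_[p]) ^ ((n : ℤ) - 2)‖ * ‖coeff k (logOnePlusT p)‖ := fun k => by
    rw [coeff_C_mul, norm_mul]
  refine ⟨fun k => ?_, ?_⟩
  · rw [neg_zero, Real.rpow_zero, one_mul, hcoeff, Padic.norm_p_zpow]
    rcases eq_or_ne k 0 with rfl | hk
    · simp [coeff_zero_logOnePlusT]
    rw [norm_coeff_logOnePlusT hk, ← zpow_add₀ (by positivity), ← zpow_natCast]
    have := padicValNat_lt_div_pow_add hp hk (n - 1)
    exact zpow_le_zpow_right₀ hpR.le (by omega)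
  · simp_rw [hcoeff]
    exact tendsto_div_pow_div_atTop_of_le_mul hpR (by positivity) (fun k => by positivity)
      fun k => mul_le_mul_of_nonneg_left (norm_coeff_logOnePlusT_le k) (norm_nonneg _)

/-- For an odd prime `p` and `n ≥ 1`, the element `log(1+T)` lies in `p^{-n+2}·Λ`, i.e.
`p^{n-2}·log(1+T) ∈ Λ` where `Λ = ℤ_p[[T]]⟨T^{p^{n-1}}/p⟩`. -/
theorem pow_mul_logOnePlus_mem_Lambda (p n : ℕ) [Fact p.Prime] (hodd : p ≠ 2) (hn : 1 ≤ n) :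
    MemLambda p n 0
      (PowerSeries.C (R := ℚ_[p]) ((p : ℚ_[p]) ^ ((n : ℤ) - 2)) * logOnePlusT p) :=
  pow_mul_logOnePlus_mem_Lambda_general p n hn
end

section
/- Divisibility estimate for the iterated connection terms: let p be odd, n ≥ 1, and work in a commutative Q_p-algebra containing elements A, B with A ∈ p^{2n}·R and 1−B ∈ p^n·R for a p-adically complete subring R, and let M be an element such that k!·binom(M+k, m) ∈ p^{−nm}·R for all k, m. Then the element (−1)^i ∑_{k=0}^{i} binom(i,k)(−AB)^k k! ∑_{j=0}^{k} binom(M+k, k−j) binom(i−k, j) (1−B)^{i−k−j}(−B)^j lies in p^{ni}·R. -/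
/-!
Term by term: in the `(k, j)` summand, `A^k` contributes `p^{2nk}` and `(1 - B)^{i-k-j}` contributes
`p^{n(i-k-j)}`, while `k!·binom(M+k, k-j)` costs at most `p^{-n(k-j)}`; the exponents add up to
exactly `ni`.
-/

/-- The generalized binomial coefficient `binom(x,m) = x(x-1)⋯(x-m+1)/m!` for an element
`x` of a commutative `ℚ_p`-algebra. -/
noncomputable def genBinomP (p : ℕ) [Fact p.Prime] {S : Type*} [CommRing S]
    [Algebra ℚ_[p] S] (x : S) (m : ℕ) : S :=
  algebraMap ℚ_[p] S ((m.factorial : ℚ_[p]))⁻¹ * ∏ t ∈ Finset.range m, (x - (t : S))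

open Finset Submodule

section
variable {S : Type*} [CommRing S] {R : Subring S}

theorem Subring.mem_span_singleton_iff {c x : S} : x ∈ span R {c} ↔ ∃ r ∈ R, x = c * r := by
  rw [mem_span_singleton]
  constructor
  · rintro ⟨r, rfl⟩
    exact ⟨r, r.2, mul_comm _ _⟩
  · rintro ⟨r, hr, rfl⟩
    exact ⟨⟨r, hr⟩, mul_comm _ _⟩

variable {π A B c : S} {n i k j : ℕ}

theorem connection_term_mem (hA : A ∈ span R {π ^ (2 * n)}) (hB : B ∈ R)
    (hB' : 1 - B ∈ span R {π ^ n}) (hc : π ^ (n * (k - j)) * c ∈ R) (hjk : j ≤ k) :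
    (i.choose k : S) * (-(A * B)) ^ k *
        (c * ((i - k).choose j : S) * (1 - B) ^ (i - k - j) * (-B) ^ j) ∈
      span R {π ^ (n * i)} := by
  -- Unless `k + j ≤ i`, a binomial factor vanishes; this keeps the truncated subtractions honest.
  rcases lt_or_ge i (k + j) with hij | hij
  · rcases lt_or_ge i k with hik | hki
    · simp [Nat.choose_eq_zero_of_lt hik]
    · simp [Nat.choose_eq_zero_of_lt (by omega : i - k < j)]
  obtain ⟨a, ha, rfl⟩ := Subring.mem_span_singleton_iff.mp hA
  obtain ⟨b, hb, hb_eq⟩ := Subring.mem_span_singleton_iff.mp hB'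
  refine Subring.mem_span_singleton_iff.mpr
    ⟨(i.choose k : S) * (-(a * B)) ^ k * (π ^ (n * (k - j)) * c) * ((i - k).choose j : S) *
      b ^ (i - k - j) * (-B) ^ j, ?_, ?_⟩
  · apply_rules [mul_mem, pow_mem, neg_mem, natCast_mem]
  · have hexp :
        (π ^ (2 * n)) ^ k * (π ^ n) ^ (i - k - j) = π ^ (n * i) * π ^ (n * (k - j)) := by
      simp only [← pow_mul, ← pow_add]
      congr 1
      zify [hjk, hij, (by omega : k ≤ i), (by omega : j ≤ i - k)]
      ring
    rw [hb_eq]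
    linear_combination ((i.choose k : S) * (-(a * B)) ^ k * c * ((i - k).choose j : S) *
      b ^ (i - k - j) * (-B) ^ j) * hexp

theorem connection_sum_mem (c : ℕ → ℕ → S) (hA : A ∈ span R {π ^ (2 * n)}) (hB : B ∈ R)
    (hB' : 1 - B ∈ span R {π ^ n}) (hc : ∀ k m, π ^ (n * m) * c k m ∈ R) :
    ∑ k ∈ range (i + 1), (i.choose k : S) * (-(A * B)) ^ k *
        ∑ j ∈ range (k + 1), c k (k - j) * ((i - k).choose j : S) * (1 - B) ^ (i - k - j) *
          (-B) ^ j ∈ span R {π ^ (n * i)} := by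
  refine sum_mem fun k _ ↦ ?_
  rw [Finset.mul_sum]
  exact sum_mem fun j hj ↦
    connection_term_mem hA hB hB' (hc k (k - j)) (Nat.lt_succ_iff.mp (mem_range.mp hj))
end

theorem iterated_connection_divisibility_general (p : ℕ) [Fact p.Prime]
    (n i : ℕ) (S : Type*) [CommRing S] [Algebra ℚ_[p] S] (R : Subring S)
    (M A B : S)
    (hA : ∃ a ∈ R, A = (p : S) ^ (2 * n) * a) (hB : B ∈ R)
    (hB' : ∃ b ∈ R, 1 - B = (p : S) ^ n * b)
    (hM : ∀ k m : ℕ, (p : S) ^ (n * m) * ((k.factorial : S) * genBinomP p (M + (k : S)) m) ∈ R) :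
    ∃ r ∈ R,
      (-1 : S) ^ i *
          ∑ k ∈ Finset.range (i + 1),
            (i.choose k : S) * (-(A * B)) ^ k * (k.factorial : S) *
              ∑ j ∈ Finset.range (k + 1),
                genBinomP p (M + (k : S)) (k - j) * ((i - k).choose j : S) *
                  (1 - B) ^ (i - k - j) * (-B) ^ j
        = (p : S) ^ (n * i) * r := by
  have hsum := connection_sum_mem (i := i)
    (fun k m ↦ (k.factorial : S) * genBinomP p (M + (k : S)) m)
    (Subring.mem_span_singleton_iff.mpr hA) hB (Subring.mem_span_singleton_iff.mpr hB') hM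
  obtain ⟨r, hr, hr_eq⟩ := Subring.mem_span_singleton_iff.mp hsum
  refine ⟨(-1) ^ i * r, mul_mem (pow_mem (neg_mem (one_mem R)) i) hr, ?_⟩
  rw [mul_left_comm, ← hr_eq]
  congr 1
  refine sum_congr rfl fun k _ ↦ ?_
  simp only [mul_assoc, Finset.mul_sum]

/-- Divisibility estimate for the iterated connection terms: for `p` odd, `n ≥ 1`,
a `p`-adically complete subring `R` of a `ℚ_p`-algebra `S`, and `A, B, M ∈ S` with
`A ∈ p^{2n}R`, `B ∈ R`, `1−B ∈ p^nR` and `k!·binom(M+k,m) ∈ p^{−nm}R` for all `k, m`,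
the element
`(−1)^i ∑_{k=0}^{i} binom(i,k)(−AB)^k k! ∑_{j=0}^{k} binom(M+k,k−j) binom(i−k,j)
   (1−B)^{i−k−j}(−B)^j`
lies in `p^{ni}·R`. -/
theorem iterated_connection_divisibility (p : ℕ) [Fact p.Prime] (hodd : p ≠ 2)
    (n i : ℕ) (hn : 1 ≤ n) (S : Type*) [CommRing S] [Algebra ℚ_[p] S] (R : Subring S)
    (M A B : S)
    (hA : ∃ a ∈ R, A = (p : S) ^ (2 * n) * a) (hB : B ∈ R)
    (hB' : ∃ b ∈ R, 1 - B = (p : S) ^ n * b)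
    (hM : ∀ k m : ℕ, (p : S) ^ (n * m) * ((k.factorial : S) * genBinomP p (M + (k : S)) m) ∈ R) :
    ∃ r ∈ R,
      (-1 : S) ^ i *
          ∑ k ∈ Finset.range (i + 1),
            (i.choose k : S) * (-(A * B)) ^ k * (k.factorial : S) *
              ∑ j ∈ Finset.range (k + 1),
                genBinomP p (M + (k : S)) (k - j) * ((i - k).choose j : S) *
                  (1 - B) ^ (i - k - j) * (-B) ^ j
        = (p : S) ^ (n * i) * r :=
  iterated_connection_divisibility_general p n i S R M A B hA hB hB' hM
end
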